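/- arXiv:2112.13557 — 10 statements merged into one kernel-verified Lean document; each statement's English description precedes it below -/
import Mathlib

section
/- Let ∘ be a base change operator on a base logic satisfying (G2), (G4), (G5), and (G6). Then the canonical assignment K ↦ ≼_K^∘ is faithful: (F1) if ω,ω' ∈ Mod(K) then it is not the case that (ω ≼_K^∘ ω' and ¬ ω' ≼_K^∘ ω); (F2) if ω ∈ Mod(K) and ω' ∉ Mod(K) then ω ≼_K^∘ ω' and ¬ ω' ≼_K^∘ ω; (F3) if Mod(K) = Mod(K') then ≼_K^∘ = ≼_{K'}^∘. -/
/-- The set of minimal elements of `S` w.r.t. relation `r`. -/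
def MinSet {Ω : Type*} (S : Set Ω) (r : Ω → Ω → Prop) : Set Ω :=
  {ω ∈ S | ∀ ω' ∈ S, r ω ω'}

/-- The auxiliary canonical relation `⊑_K^∘`. -/
def sqRel {Ω B : Type*} (Mod : B → Set Ω) (op : B → B → B) (K : B) (ω1 ω2 : Ω) : Prop :=
  ∀ Γ : B, ω1 ∈ Mod Γ → ω2 ∈ Mod Γ → ω2 ∈ Mod (op K Γ) → ω1 ∈ Mod (op K Γ)

/-- The canonical relation `≼_K^∘`. -/
def canRel {Ω B : Type*} (Mod : B → Set Ω) (op : B → B → B) (K : B) (ω1 ω2 : Ω) : Prop :=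
  ω1 ∈ Mod K ∨ (ω1 ∉ Mod K ∧ ω2 ∉ Mod K ∧ sqRel Mod op K ω1 ω2)

theorem stmt5 {Ω B : Type*} (Mod : B → Set Ω) (U : B → B → B) (op : B → B → B)
    (hU : ∀ B1 B2, Mod (U B1 B2) = Mod B1 ∩ Mod B2)
    (hG2 : ∀ K Γ, (Mod (U K Γ)).Nonempty → Mod (op K Γ) = Mod (U K Γ))
    (hG4 : ∀ K1 K2 Γ1 Γ2, Mod K1 = Mod K2 → Mod Γ1 = Mod Γ2 →
      Mod (op K1 Γ1) = Mod (op K2 Γ2))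
    (hG5 : ∀ K Γ1 Γ2, Mod (U (op K Γ1) Γ2) ⊆ Mod (op K (U Γ1 Γ2)))
    (hG6 : ∀ K Γ1 Γ2, (Mod (U (op K Γ1) Γ2)).Nonempty →
      Mod (op K (U Γ1 Γ2)) ⊆ Mod (U (op K Γ1) Γ2)) :
    (∀ (K : B) (ω ω' : Ω), ω ∈ Mod K → ω' ∈ Mod K →
      ¬ (canRel Mod op K ω ω' ∧ ¬ canRel Mod op K ω' ω)) ∧
    (∀ (K : B) (ω ω' : Ω), ω ∈ Mod K → ω' ∉ Mod K →
      canRel Mod op K ω ω' ∧ ¬ canRel Mod op K ω' ω) ∧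
    (∀ K K' : B, Mod K = Mod K' → canRel Mod op K = canRel Mod op K') := by
  refine ⟨?_, ?_, ?_⟩
  · intro K ω ω' hω hω' ⟨_, hn⟩
    exact hn (Or.inl hω')
  · intro K ω ω' hω hω'
    refine ⟨Or.inl hω, ?_⟩
    rintro (h | ⟨_, h, _⟩)
    · exact hω' h
    · exact h hω
  · intro K K' hKK'
    funext ω1 ω2
    have hsq : sqRel Mod op K ω1 ω2 ↔ sqRel Mod op K' ω1 ω2 := by
      unfold sqRel
      constructor <;> intro h Γ h1 h2 h3
      · rw [← hG4 K K' Γ Γ hKK' rfl] at h3 ⊢; exact h Γ h1 h2 h3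
      · rw [hG4 K K' Γ Γ hKK' rfl] at h3 ⊢; exact h Γ h1 h2 h3
    simp only [canRel, hKK', hsq]
end

section
/- Let ∘ be a base change operator on a base logic, and suppose there is an assignment K ↦ ≼_K mapping each base to a total relation on Ω such that: (i) each ≼_K is min-complete (for every base Γ with Mod(Γ) ≠ ∅, min(Mod(Γ), ≼_K) ≠ ∅) and min-retractive (for all Γ and ω,ω' ∈ Mod(Γ), if ω' ≼_K ω and ω ∈ min(Mod(Γ),≼_K) then ω' ∈ min(Mod(Γ),≼_K)); (ii) the assignment is faithful ((F1) no ω strictly below ω' when both are in Mod(K); (F2) ω ∈ Mod(K), ω' ∉ Mod(K) implies ω strictly below ω'; (F3) Mod(K)=Mod(K') implies ≼_K = ≼_{K'}); and (iii) ∘ is compatible with the assignment, i.e., Mod(K∘Γ) = min(Mod(Γ), ≼_K) for all K, Γ. Then ∘ satisfies postulates (G1)–(G6). -/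
theorem stmt6 {Ω B : Type*} (Mod : B → Set Ω) (U : B → B → B) (op : B → B → B)
    (hU : ∀ B1 B2, Mod (U B1 B2) = Mod B1 ∩ Mod B2)
    (a : B → Ω → Ω → Prop)
    (htotal : ∀ (K : B) (ω1 ω2 : Ω), a K ω1 ω2 ∨ a K ω2 ω1)
    (hmincomplete : ∀ (K Γ : B), (Mod Γ).Nonempty → (MinSet (Mod Γ) (a K)).Nonempty)
    (hminretractive : ∀ (K Γ : B) (ω ω' : Ω), ω ∈ Mod Γ → ω' ∈ Mod Γ →
      a K ω' ω → ω ∈ MinSet (Mod Γ) (a K) → ω' ∈ MinSet (Mod Γ) (a K))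
    (hF1 : ∀ (K : B) (ω ω' : Ω), ω ∈ Mod K → ω' ∈ Mod K →
      ¬ (a K ω ω' ∧ ¬ a K ω' ω))
    (hF2 : ∀ (K : B) (ω ω' : Ω), ω ∈ Mod K → ω' ∉ Mod K →
      a K ω ω' ∧ ¬ a K ω' ω)
    (hF3 : ∀ K K' : B, Mod K = Mod K' → a K = a K')
    (hcompat : ∀ K Γ : B, Mod (op K Γ) = MinSet (Mod Γ) (a K)) :
    (∀ K Γ, Mod (op K Γ) ⊆ Mod Γ) ∧
    (∀ K Γ, (Mod (U K Γ)).Nonempty → Mod (op K Γ) = Mod (U K Γ)) ∧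
    (∀ K Γ, (Mod Γ).Nonempty → (Mod (op K Γ)).Nonempty) ∧
    (∀ K1 K2 Γ1 Γ2, Mod K1 = Mod K2 → Mod Γ1 = Mod Γ2 →
      Mod (op K1 Γ1) = Mod (op K2 Γ2)) ∧
    (∀ K Γ1 Γ2, Mod (U (op K Γ1) Γ2) ⊆ Mod (op K (U Γ1 Γ2))) ∧
    (∀ K Γ1 Γ2, (Mod (U (op K Γ1) Γ2)).Nonempty →
      Mod (op K (U Γ1 Γ2)) ⊆ Mod (U (op K Γ1) Γ2)) := by
  refine ⟨?_, ?_, ?_, ?_, ?_, ?_⟩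
  · intro K Γ ω hω
    rw [hcompat] at hω; exact hω.1
  · intro K Γ ⟨ω0, hω0⟩
    rw [hU] at hω0 ⊢
    rw [hcompat]
    ext ω
    constructor
    · rintro ⟨hΓ, hmin⟩
      refine ⟨?_, hΓ⟩
      by_contra hnK
      exact (hF2 K ω0 ω hω0.1 hnK).2 (hmin ω0 hω0.2)
    · rintro ⟨hK, hΓ⟩
      refine ⟨hΓ, fun ω' hω' => ?_⟩
      by_cases h : ω' ∈ Mod K
      · rcases htotal K ω ω' with h1 | h1
        · exact h1
        · by_contra h2
          exact hF1 K ω' ω h hK ⟨h1, h2⟩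
      · exact (hF2 K ω ω' hK h).1
  · intro K Γ h
    rw [hcompat]; exact hmincomplete K Γ h
  · intro K1 K2 Γ1 Γ2 hK hΓ
    rw [hcompat, hcompat, hΓ, hF3 K1 K2 hK]
  · intro K Γ1 Γ2 ω hω
    rw [hU, Set.mem_inter_iff, hcompat] at hω
    rw [hcompat, hU]
    obtain ⟨⟨h1, hmin⟩, h2⟩ := hω
    exact ⟨⟨h1, h2⟩, fun ω' hω' => hmin ω' hω'.1⟩
  · intro K Γ1 Γ2 ⟨ω0, hω0⟩ ω hω
    rw [hU, Set.mem_inter_iff, hcompat] at hω0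
    rw [hcompat, hU] at hω
    rw [hU, Set.mem_inter_iff, hcompat]
    obtain ⟨⟨h1, h2⟩, hmin⟩ := hω
    have haux : a K ω ω0 := hmin ω0 ⟨hω0.1.1, hω0.2⟩
    exact ⟨hminretractive K Γ1 ω0 ω hω0.1.1 h1 haux hω0.1, h2⟩
end

section
/- Let ≼ be a min-retractive relation on Ω for a base logic, and let Γ, Γ₁, …, Γₙ be bases with Mod(Γ) = Mod(Γ₁) ∪ … ∪ Mod(Γₙ). Then there exists a set of indices I ⊆ {1,…,n} such that min(Mod(Γ), ≼) = ⋃_{i ∈ I} min(Mod(Γᵢ), ≼). -/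
theorem stmt10 {Ω B : Type*} (Mod : B → Set Ω) (r : Ω → Ω → Prop)
    (hmr : ∀ (Γ : B) (ω ω' : Ω), ω ∈ Mod Γ → ω' ∈ Mod Γ →
      r ω' ω → ω ∈ MinSet (Mod Γ) r → ω' ∈ MinSet (Mod Γ) r)
    (n : ℕ) (f : Fin n → B) (Γ : B)
    (hcover : Mod Γ = ⋃ i : Fin n, Mod (f i)) :
    ∃ I : Set (Fin n), MinSet (Mod Γ) r = ⋃ i ∈ I, MinSet (Mod (f i)) r := by
  refine ⟨{i | (Mod (f i) ∩ MinSet (Mod Γ) r).Nonempty}, ?_⟩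
  have hsub : ∀ i : Fin n, Mod (f i) ⊆ Mod Γ := by
    intro i ω hω
    rw [hcover]
    exact Set.mem_iUnion.mpr ⟨i, hω⟩
  ext ω
  constructor
  · intro hω
    have hωΓ : ω ∈ Mod Γ := hω.1
    rw [hcover] at hωΓ
    obtain ⟨i, hi⟩ := Set.mem_iUnion.mp hωΓ
    refine Set.mem_biUnion (show _ from ⟨ω, hi, hω⟩) ?_
    exact ⟨hi, fun ω' hω' => hω.2 ω' (hsub i hω')⟩
  · intro hω
    obtain ⟨i, hi, hmin⟩ := Set.mem_iUnion₂.mp hω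
    obtain ⟨ω₀, hω₀i, hω₀min⟩ := hi
    exact hmr Γ ω₀ ω hω₀min.1 (hsub i hmin.1)
      (hmin.2 ω₀ hω₀i) hω₀min
end

section
/- Let ∘ be a base change operator on a base logic satisfying (G1)–(G6). Then ∘ satisfies expressible disjunctive factoring: for all bases K, Γ, Γ₁, Γ₂ with Mod(Γ) = Mod(Γ₁) ∪ Mod(Γ₂), it holds that Mod(K∘Γ) = Mod(K∘Γ₁), or Mod(K∘Γ) = Mod(K∘Γ₂), or Mod(K∘Γ) = Mod(K∘Γ₁) ∪ Mod(K∘Γ₂). -/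
theorem stmt11 {Ω B : Type*} (Mod : B → Set Ω) (U : B → B → B) (op : B → B → B)
    (hU : ∀ B1 B2, Mod (U B1 B2) = Mod B1 ∩ Mod B2)
    (hG1 : ∀ K Γ, Mod (op K Γ) ⊆ Mod Γ)
    (hG2 : ∀ K Γ, (Mod (U K Γ)).Nonempty → Mod (op K Γ) = Mod (U K Γ))
    (hG3 : ∀ K Γ, (Mod Γ).Nonempty → (Mod (op K Γ)).Nonempty)
    (hG4 : ∀ K1 K2 Γ1 Γ2, Mod K1 = Mod K2 → Mod Γ1 = Mod Γ2 →
      Mod (op K1 Γ1) = Mod (op K2 Γ2))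
    (hG5 : ∀ K Γ1 Γ2, Mod (U (op K Γ1) Γ2) ⊆ Mod (op K (U Γ1 Γ2)))
    (hG6 : ∀ K Γ1 Γ2, (Mod (U (op K Γ1) Γ2)).Nonempty →
      Mod (op K (U Γ1 Γ2)) ⊆ Mod (U (op K Γ1) Γ2)) :
    ∀ K Γ Γ1 Γ2 : B, Mod Γ = Mod Γ1 ∪ Mod Γ2 →
      Mod (op K Γ) = Mod (op K Γ1) ∨
      Mod (op K Γ) = Mod (op K Γ2) ∨
      Mod (op K Γ) = Mod (op K Γ1) ∪ Mod (op K Γ2) := by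
  intro K Γ Γ1 Γ2 hΓ
  -- key lemma: if Mod(op K Γ) ∩ Mod Γi nonempty, then Mod(op K Γi) = Mod(op K Γ) ∩ Mod Γi
  have key : ∀ Γi : B, Mod Γi ⊆ Mod Γ → (Mod (op K Γ) ∩ Mod Γi).Nonempty →
      Mod (op K Γi) = Mod (op K Γ) ∩ Mod Γi := by
    intro Γi hsub hne
    have hUeq : Mod (U Γ Γi) = Mod Γi := by
      rw [hU]; exact Set.inter_eq_self_of_subset_right hsub
    have h4 : Mod (op K Γi) = Mod (op K (U Γ Γi)) := hG4 K K Γi (U Γ Γi) rfl hUeq.symm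
    have hne' : (Mod (U (op K Γ) Γi)).Nonempty := by rw [hU]; exact hne
    have h5 := hG5 K Γ Γi
    have h6 := hG6 K Γ Γi hne'
    rw [hU] at h5 h6
    rw [h4]
    exact Set.Subset.antisymm h6 h5
  by_cases hΓne : (Mod Γ).Nonempty
  · have hMne := hG3 K Γ hΓne
    have hMsub : Mod (op K Γ) ⊆ Mod Γ1 ∪ Mod Γ2 := hΓ ▸ hG1 K Γ
    by_cases h1 : (Mod (op K Γ) ∩ Mod Γ1).Nonempty
    · have e1 := key Γ1 (by rw [hΓ]; exact Set.subset_union_left) h1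
      by_cases h2 : (Mod (op K Γ) ∩ Mod Γ2).Nonempty
      · have e2 := key Γ2 (by rw [hΓ]; exact Set.subset_union_right) h2
        right; right
        rw [e1, e2, ← Set.inter_union_distrib_left]
        exact (Set.inter_eq_self_of_subset_left hMsub).symm
      · left
        rw [e1]
        rw [Set.not_nonempty_iff_eq_empty] at h2
        have : Mod (op K Γ) ⊆ Mod Γ1 := by
          intro x hx
          rcases hMsub hx with h | h
          · exact h
          · exact absurd (Set.mem_inter hx h) (by simp [h2])
        exact (Set.inter_eq_self_of_subset_left this).symm
    · right; left
      rw [Set.not_nonempty_iff_eq_empty] at h1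
      have hsub2 : Mod (op K Γ) ⊆ Mod Γ2 := by
        intro x hx
        rcases hMsub hx with h | h
        · exact absurd (Set.mem_inter hx h) (by simp [h1])
        · exact h
      have h2 : (Mod (op K Γ) ∩ Mod Γ2).Nonempty :=
        ⟨hMne.choose, hMne.choose_spec, hsub2 hMne.choose_spec⟩
      have e2 := key Γ2 (by rw [hΓ]; exact Set.subset_union_right) h2
      rw [e2]
      exact (Set.inter_eq_self_of_subset_left hsub2).symm
  · left
    rw [Set.not_nonempty_iff_eq_empty] at hΓne
    have h1 : Mod Γ1 = ∅ := by
      rw [hΓne] at hΓ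
      exact Set.subset_eq_empty (Set.subset_union_left.trans hΓ.symm.subset) rfl
    exact hG4 K K Γ Γ1 rfl (by rw [hΓne, h1])
end

section
/- Every trio-expressible base logic is preorder-enforcing: if for any three interpretations ω₁, ω₂, ω₃ ∈ Ω there exists a base Γ with Mod(Γ) = {ω₁, ω₂, ω₃}, then every binary relation on Ω that is total, min-complete, and min-retractive is transitive (and hence a total preorder). -/
theorem stmt12 {Ω B : Type*} (Mod : B → Set Ω)
    (htrio : ∀ ω1 ω2 ω3 : Ω, ∃ Γ : B, Mod Γ = {ω1, ω2, ω3}) :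
    ∀ r : Ω → Ω → Prop,
      (∀ ω1 ω2 : Ω, r ω1 ω2 ∨ r ω2 ω1) →
      (∀ Γ : B, (Mod Γ).Nonempty → (MinSet (Mod Γ) r).Nonempty) →
      (∀ (Γ : B) (ω ω' : Ω), ω ∈ Mod Γ → ω' ∈ Mod Γ →
        r ω' ω → ω ∈ MinSet (Mod Γ) r → ω' ∈ MinSet (Mod Γ) r) →
      Transitive r := by
  intro r _htot hcomp hretr a b c hab hbc
  obtain ⟨Γ, hΓ⟩ := htrio a b c
  have ha : a ∈ Mod Γ := by rw [hΓ]; left; rfl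
  have hb : b ∈ Mod Γ := by rw [hΓ]; right; left; rfl
  have hc : c ∈ Mod Γ := by rw [hΓ]; right; right; rfl
  obtain ⟨m, hm⟩ := hcomp Γ ⟨a, ha⟩
  have hmΓ : m ∈ Mod Γ := hm.1
  have hamin : a ∈ MinSet (Mod Γ) r := by
    rw [hΓ] at hmΓ
    rcases hmΓ with h | h | h
    · rwa [h] at hm
    · rw [h] at hm; exact hretr Γ b a hb ha hab hm
    · rw [h] at hm
      have hbmin := hretr Γ c b hc hb hbc hm
      exact hretr Γ b a hb ha hab hbmin
  exact hamin.2 c hc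
end

section
/- If a base logic is not trio-expressible (there exist three interpretations ω₁, ω₂, ω₃ such that no base Γ has Mod(Γ) = {ω₁, ω₂, ω₃}), and Ω \ {ω₁,ω₂,ω₃} admits a well-order, then there exists a total, min-complete, min-retractive relation on Ω that is not transitive. Hence every preorder-enforcing base logic (in which Ω minus any three points is well-orderable) is trio-expressible. -/
theorem stmt13 {Ω B : Type*} (Mod : B → Set Ω)
    (ω1 ω2 ω3 : Ω) (h12 : ω1 ≠ ω2) (h13 : ω1 ≠ ω3) (h23 : ω2 ≠ ω3)
    (hnotrio : ∀ Γ : B, Mod Γ ≠ {ω1, ω2, ω3})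
    (hwo : ∃ s : {x : Ω // x ∉ ({ω1, ω2, ω3} : Set Ω)} →
             {x : Ω // x ∉ ({ω1, ω2, ω3} : Set Ω)} → Prop, IsWellOrder _ s) :
    ∃ r : Ω → Ω → Prop,
      (∀ a b : Ω, r a b ∨ r b a) ∧
      (∀ Γ : B, (Mod Γ).Nonempty → (MinSet (Mod Γ) r).Nonempty) ∧
      (∀ (Γ : B) (a b : Ω), a ∈ Mod Γ → b ∈ Mod Γ →
        r b a → a ∈ MinSet (Mod Γ) r → b ∈ MinSet (Mod Γ) r) ∧
      ¬ Transitive r := by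
  classical
  obtain ⟨s, hs⟩ := hwo
  have htri : ∀ a b, s a b ∨ a = b ∨ s b a := fun a b => by haveI := hs; exact trichotomous_of s a b
  have htrans : ∀ a b c, s a b → s b c → s a c := fun a b c => by haveI := hs; exact trans_of s
  have hwf := hs.toIsWellFounded.wf
  have hT : ({ω1, ω2, ω3} : Set Ω) = ({ω1, ω2, ω3} : Set Ω) := rfl
  have hω1T : ω1 ∈ ({ω1, ω2, ω3} : Set Ω) := by simp
  have hω2T : ω2 ∈ ({ω1, ω2, ω3} : Set Ω) := by simp
  have hω3T : ω3 ∈ ({ω1, ω2, ω3} : Set Ω) := by simp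
  have hmemT : ∀ x, x ∈ ({ω1, ω2, ω3} : Set Ω) → x = ω1 ∨ x = ω2 ∨ x = ω3 := by
    intro x hx; simpa using hx
  refine ⟨fun a b =>
    a = b ∨ (a = ω1 ∧ b = ω2) ∨ (a = ω2 ∧ b = ω3) ∨ (a = ω3 ∧ b = ω1) ∨
    (a ∉ ({ω1, ω2, ω3} : Set Ω) ∧ b ∈ ({ω1, ω2, ω3} : Set Ω)) ∨ (∃ (ha : a ∉ ({ω1, ω2, ω3} : Set Ω)) (hb : b ∉ ({ω1, ω2, ω3} : Set Ω)), s ⟨a, ha⟩ ⟨b, hb⟩),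
    ?_, ?_, ?_, ?_⟩
  · -- totality
    intro a b
    by_cases hab : a = b
    · exact Or.inl (Or.inl hab)
    by_cases haT : a ∈ ({ω1, ω2, ω3} : Set Ω)
    · by_cases hbT : b ∈ ({ω1, ω2, ω3} : Set Ω)
      · rcases hmemT a haT with rfl | rfl | rfl <;>
          rcases hmemT b hbT with rfl | rfl | rfl <;>
          first
          | exact absurd rfl hab
          | exact Or.inl (Or.inr (Or.inl ⟨rfl, rfl⟩))
          | exact Or.inl (Or.inr (Or.inr (Or.inl ⟨rfl, rfl⟩)))
          | exact Or.inl (Or.inr (Or.inr (Or.inr (Or.inl ⟨rfl, rfl⟩))))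
          | exact Or.inr (Or.inr (Or.inl ⟨rfl, rfl⟩))
          | exact Or.inr (Or.inr (Or.inr (Or.inl ⟨rfl, rfl⟩)))
          | exact Or.inr (Or.inr (Or.inr (Or.inr (Or.inl ⟨rfl, rfl⟩))))
      · exact Or.inr (Or.inr <| Or.inr <| Or.inr <| Or.inr <| Or.inl ⟨hbT, haT⟩)
    · by_cases hbT : b ∈ ({ω1, ω2, ω3} : Set Ω)
      · exact Or.inl (Or.inr <| Or.inr <| Or.inr <| Or.inr <| Or.inl ⟨haT, hbT⟩)
      · rcases htri ⟨a, haT⟩ ⟨b, hbT⟩ with h | h | h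
        · exact Or.inl (Or.inr <| Or.inr <| Or.inr <| Or.inr <| Or.inr ⟨haT, hbT, h⟩)
        · exact absurd (congrArg Subtype.val h) hab
        · exact Or.inr (Or.inr <| Or.inr <| Or.inr <| Or.inr <| Or.inr ⟨hbT, haT, h⟩)
  · -- min-completeness
    intro Γ hne
    by_cases hout : ∃ x ∈ Mod Γ, x ∉ ({ω1, ω2, ω3} : Set Ω)
    · obtain ⟨x, hxS, hxT⟩ := hout
      obtain ⟨m, hmS, hmin⟩ := hwf.has_min
        {p : {x : Ω // x ∉ ({ω1, ω2, ω3} : Set Ω)} | p.val ∈ Mod Γ} ⟨⟨x, hxT⟩, hxS⟩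
      refine ⟨m.val, hmS, ?_⟩
      intro y hy
      by_cases hyT : y ∈ ({ω1, ω2, ω3} : Set Ω)
      · exact Or.inr (Or.inr <| Or.inr <| Or.inr <| Or.inl ⟨m.2, hyT⟩)
      · rcases htri m ⟨y, hyT⟩ with h | h | h
        · exact Or.inr (Or.inr <| Or.inr <| Or.inr <| Or.inr ⟨m.2, hyT, h⟩)
        · exact Or.inl (congrArg Subtype.val h)
        · exact absurd h (hmin ⟨y, hyT⟩ hy)
    · push_neg at hout
      have hsub : Mod Γ ⊆ ({ω1, ω2, ω3} : Set Ω) := fun x hx => hout x hx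
      have hneq : Mod Γ ≠ ({ω1, ω2, ω3} : Set Ω) := hnotrio Γ
      have hgen : ∀ w ∈ Mod Γ, (∀ y ∈ Mod Γ, y = w ∨
          (w = ω1 ∧ y = ω2) ∨ (w = ω2 ∧ y = ω3) ∨ (w = ω3 ∧ y = ω1)) →
          (MinSet (Mod Γ) (fun a b =>
            a = b ∨ (a = ω1 ∧ b = ω2) ∨ (a = ω2 ∧ b = ω3) ∨ (a = ω3 ∧ b = ω1) ∨
            (a ∉ ({ω1, ω2, ω3} : Set Ω) ∧ b ∈ ({ω1, ω2, ω3} : Set Ω)) ∨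
            (∃ (ha : a ∉ ({ω1, ω2, ω3} : Set Ω)) (hb : b ∉ ({ω1, ω2, ω3} : Set Ω)),
              s ⟨a, ha⟩ ⟨b, hb⟩))).Nonempty := by
        intro w hw hy
        refine ⟨w, hw, fun y hyS => ?_⟩
        rcases hy y hyS with rfl | h | h | h
        · exact Or.inl rfl
        · exact Or.inr (Or.inl ⟨h.1, h.2⟩)
        · exact Or.inr (Or.inr <| Or.inl ⟨h.1, h.2⟩)
        · exact Or.inr (Or.inr <| Or.inr <| Or.inl ⟨h.1, h.2⟩)
      by_cases h1 : ω1 ∈ Mod Γ <;> by_cases h2 : ω2 ∈ Mod Γ <;> by_cases h3 : ω3 ∈ Mod Γ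
      · exact absurd (Set.Subset.antisymm hsub (by
          intro x hx
          rcases hmemT x hx with rfl | rfl | rfl <;> assumption)) hneq
      · refine hgen ω1 h1 fun y hyS => ?_
        rcases hmemT y (hsub hyS) with rfl | rfl | rfl
        · exact Or.inl rfl
        · exact Or.inr (Or.inl ⟨rfl, rfl⟩)
        · exact absurd hyS h3
      · refine hgen ω3 h3 fun y hyS => ?_
        rcases hmemT y (hsub hyS) with rfl | rfl | rfl
        · exact Or.inr (Or.inr <| Or.inr ⟨rfl, rfl⟩)
        · exact absurd hyS h2
        · exact Or.inl rfl
      · refine hgen ω1 h1 fun y hyS => ?_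
        rcases hmemT y (hsub hyS) with rfl | rfl | rfl
        · exact Or.inl rfl
        · exact absurd hyS h2
        · exact absurd hyS h3
      · refine hgen ω2 h2 fun y hyS => ?_
        rcases hmemT y (hsub hyS) with rfl | rfl | rfl
        · exact absurd hyS h1
        · exact Or.inl rfl
        · exact Or.inr (Or.inr <| Or.inl ⟨rfl, rfl⟩)
      · refine hgen ω2 h2 fun y hyS => ?_
        rcases hmemT y (hsub hyS) with rfl | rfl | rfl
        · exact absurd hyS h1
        · exact Or.inl rfl
        · exact absurd hyS h3
      · refine hgen ω3 h3 fun y hyS => ?_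
        rcases hmemT y (hsub hyS) with rfl | rfl | rfl
        · exact absurd hyS h1
        · exact absurd hyS h2
        · exact Or.inl rfl
      · obtain ⟨x, hx⟩ := hne
        rcases hmemT x (hsub hx) with rfl | rfl | rfl
        · exact absurd hx h1
        · exact absurd hx h2
        · exact absurd hx h3
  · -- min-retractivity
    intro Γ a b ha hb hrba hmin
    obtain ⟨-, hmin'⟩ := hmin
    have hneq : Mod Γ ≠ ({ω1, ω2, ω3} : Set Ω) := hnotrio Γ
    refine ⟨hb, fun y hy => ?_⟩
    have hay := hmin' y hy
    -- helper: if a ∈ ({ω1, ω2, ω3} : Set Ω) is minimal, then Mod Γ ⊆ ({ω1, ω2, ω3} : Set Ω)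
    have hsubT : a ∈ ({ω1, ω2, ω3} : Set Ω) → Mod Γ ⊆ ({ω1, ω2, ω3} : Set Ω) := by
      intro haT x hx
      rcases hmin' x hx with rfl | h | h | h | h | h
      · exact haT
      · exact h.2 ▸ hω2T
      · exact h.2 ▸ hω3T
      · exact h.2 ▸ hω1T
      · exact absurd haT h.1
      · exact absurd haT h.1
    rcases hrba with rfl | ⟨hb1, ha2⟩ | ⟨hb2, ha3⟩ | ⟨hb3, ha1⟩ | ⟨hbT, haT⟩ | ⟨hbT, haT, hsba⟩
    · exact hay
    · -- b = ω1, a = ω2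
      subst hb1; subst ha2
      have hsub := hsubT hω2T
      rcases hay with rfl | h | h | h | h | h
      · -- y = ω2
        exact Or.inr (Or.inl ⟨rfl, rfl⟩)
      · exact absurd h.1 h12.symm
      · -- y = ω3 : then Mod Γ = T, contradiction
        exfalso
        refine hneq (Set.Subset.antisymm hsub ?_)
        intro x hx
        rcases hmemT x hx with rfl | rfl | rfl
        · exact hb
        · exact ha
        · exact h.2 ▸ hy
      · exact absurd h.1 h23
      · exact absurd hω2T h.1
      · exact absurd hω2T h.1
    · -- b = ω2, a = ω3
      subst hb2; subst ha3
      have hsub := hsubT hω3T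
      rcases hay with rfl | h | h | h | h | h
      · exact Or.inr (Or.inr <| Or.inl ⟨rfl, rfl⟩)
      · exact absurd h.1 h13.symm
      · exact absurd h.1 h23.symm
      · -- y = ω1 : Mod Γ = T
        exfalso
        refine hneq (Set.Subset.antisymm hsub ?_)
        intro x hx
        rcases hmemT x hx with rfl | rfl | rfl
        · exact h.2 ▸ hy
        · exact hb
        · exact ha
      · exact absurd hω3T h.1
      · exact absurd hω3T h.1
    · -- b = ω3, a = ω1
      subst hb3; subst ha1
      have hsub := hsubT hω1T
      rcases hay with rfl | h | h | h | h | h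
      · exact Or.inr (Or.inr <| Or.inr <| Or.inl ⟨rfl, rfl⟩)
      · -- y = ω2 : Mod Γ = T
        exfalso
        refine hneq (Set.Subset.antisymm hsub ?_)
        intro x hx
        rcases hmemT x hx with rfl | rfl | rfl
        · exact ha
        · exact h.2 ▸ hy
        · exact hb
      · exact absurd h.1 h12
      · exact absurd h.1 h13
      · exact absurd hω1T h.1
      · exact absurd hω1T h.1
    · -- b ∉ ({ω1, ω2, ω3} : Set Ω), a ∈ ({ω1, ω2, ω3} : Set Ω) : impossible since a minimal and b ∈ Mod Γ
      exact absurd (hsubT haT hb) hbT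
    · -- b, a ∉ ({ω1, ω2, ω3} : Set Ω), s b a
      by_cases hyT : y ∈ ({ω1, ω2, ω3} : Set Ω)
      · exact Or.inr (Or.inr <| Or.inr <| Or.inr <| Or.inl ⟨hbT, hyT⟩)
      · rcases hay with rfl | h | h | h | h | h
        · exact Or.inr (Or.inr <| Or.inr <| Or.inr <| Or.inr ⟨hbT, hyT, hsba⟩)
        · exact absurd (h.1 ▸ hω1T) haT
        · exact absurd (h.1 ▸ hω2T) haT
        · exact absurd (h.1 ▸ hω3T) haT
        · exact absurd h.2 hyT
        · obtain ⟨ha', hy', hsay⟩ := h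
          exact Or.inr (Or.inr <| Or.inr <| Or.inr <| Or.inr
            ⟨hbT, hyT, htrans _ _ _ hsba hsay⟩)
  · -- not transitive
    intro htr
    have h1 : (fun a b => a = b ∨ (a = ω1 ∧ b = ω2) ∨ (a = ω2 ∧ b = ω3) ∨ (a = ω3 ∧ b = ω1) ∨
        (a ∉ ({ω1, ω2, ω3} : Set Ω) ∧ b ∈ ({ω1, ω2, ω3} : Set Ω)) ∨ (∃ (ha : a ∉ ({ω1, ω2, ω3} : Set Ω)) (hb : b ∉ ({ω1, ω2, ω3} : Set Ω)), s ⟨a, ha⟩ ⟨b, hb⟩)) ω1 ω2 :=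
      Or.inr (Or.inl ⟨rfl, rfl⟩)
    have h2 : (fun a b => a = b ∨ (a = ω1 ∧ b = ω2) ∨ (a = ω2 ∧ b = ω3) ∨ (a = ω3 ∧ b = ω1) ∨
        (a ∉ ({ω1, ω2, ω3} : Set Ω) ∧ b ∈ ({ω1, ω2, ω3} : Set Ω)) ∨ (∃ (ha : a ∉ ({ω1, ω2, ω3} : Set Ω)) (hb : b ∉ ({ω1, ω2, ω3} : Set Ω)), s ⟨a, ha⟩ ⟨b, hb⟩)) ω2 ω3 :=
      Or.inr (Or.inr <| Or.inl ⟨rfl, rfl⟩)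
    rcases htr h1 h2 with h | h | h | h | h | h
    · exact h13 h
    · exact h23 h.2.symm
    · exact h12 h.1
    · exact h13 h.1
    · exact h.1 hω1T
    · exact h.1 hω1T
end

section
/- For every preorder ≤ on a set X there exists a total preorder ≤' on X such that (i) x ≤ y implies x ≤' y, and (ii) x ≤ y together with ¬(y ≤ x) implies x ≤' y and ¬(y ≤' x). -/
theorem stmt14 {X : Type*} (r : X → X → Prop)
    (hrefl : Reflexive r) (htrans : Transitive r) :
    ∃ r' : X → X → Prop,
      Reflexive r' ∧ Transitive r' ∧ (∀ x y : X, r' x y ∨ r' y x) ∧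
      (∀ x y : X, r x y → r' x y) ∧
      (∀ x y : X, r x y → ¬ r y x → r' x y ∧ ¬ r' y x) := by
  classical
  let s : Setoid X := ⟨fun x y => r x y ∧ r y x,
    ⟨fun x => ⟨hrefl x, hrefl x⟩, fun h => ⟨h.2, h.1⟩,
      fun h1 h2 => ⟨htrans h1.1 h2.1, htrans h2.2 h1.2⟩⟩⟩
  let q : Quotient s → Quotient s → Prop :=
    Quotient.lift₂ (fun x y => r x y) (by
      rintro a b c d ⟨hac, hca⟩ ⟨hbd, hdb⟩
      exact propext ⟨fun h => htrans hca (htrans h hbd), fun h => htrans hac (htrans h hdb)⟩)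
  have hq : ∀ x y : X, q ⟦x⟧ ⟦y⟧ = r x y := fun x y => rfl
  have : IsPartialOrder (Quotient s) q :=
    { refl := fun a => by induction a using Quotient.ind; exact hrefl _
      trans := fun a b c => by
        induction a using Quotient.ind
        induction b using Quotient.ind
        induction c using Quotient.ind
        exact fun h1 h2 => htrans h1 h2
      antisymm := fun a b => by
        induction a using Quotient.ind
        induction b using Quotient.ind
        exact fun h1 h2 => Quotient.sound ⟨h1, h2⟩ }
  obtain ⟨t, ht, hle⟩ := extend_partialOrder q
  refine ⟨fun x y => t ⟦x⟧ ⟦y⟧, fun x => ht.1.1.1.refl _,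
    fun a b c h1 h2 => ht.1.1.2.trans _ _ _ h1 h2,
    fun x y => ht.2.total _ _, fun x y h => hle _ _ h, ?_⟩
  intro x y hxy hnyx
  have h1 : t ⟦x⟧ ⟦y⟧ := hle _ _ hxy
  refine ⟨h1, fun h2 => ?_⟩
  have := ht.1.2.antisymm _ _ h1 h2
  exact hnyx (Quotient.exact this).2
end

section
/- Let ∘ be a base change operator on a base logic satisfying (G1)–(G6), and let K ↦ ≼_K be any assignment of total relations to bases that is faithful, min-complete, min-retractive, and compatible with ∘ (Mod(K∘Γ) = min(Mod(Γ), ≼_K) for all K, Γ). Then ≼_K is contained in the canonical relation: for all interpretations ω₁, ω₂ and every base K, ω₁ ≼_K ω₂ implies ω₁ ≼_K^∘ ω₂, where ω₁ ≼_K^∘ ω₂ iff ω₁ ∈ Mod(K), or (ω₁,ω₂ ∉ Mod(K) and for all Γ with ω₁,ω₂ ∈ Mod(Γ), ω₂ ∈ Mod(K∘Γ) implies ω₁ ∈ Mod(K∘Γ)). -/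
theorem stmt15 {Ω B : Type*} (Mod : B → Set Ω) (U : B → B → B) (op : B → B → B)
    (hU : ∀ B1 B2, Mod (U B1 B2) = Mod B1 ∩ Mod B2)
    (hG1 : ∀ K Γ, Mod (op K Γ) ⊆ Mod Γ)
    (hG2 : ∀ K Γ, (Mod (U K Γ)).Nonempty → Mod (op K Γ) = Mod (U K Γ))
    (hG3 : ∀ K Γ, (Mod Γ).Nonempty → (Mod (op K Γ)).Nonempty)
    (hG4 : ∀ K1 K2 Γ1 Γ2, Mod K1 = Mod K2 → Mod Γ1 = Mod Γ2 →
      Mod (op K1 Γ1) = Mod (op K2 Γ2))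
    (hG5 : ∀ K Γ1 Γ2, Mod (U (op K Γ1) Γ2) ⊆ Mod (op K (U Γ1 Γ2)))
    (hG6 : ∀ K Γ1 Γ2, (Mod (U (op K Γ1) Γ2)).Nonempty →
      Mod (op K (U Γ1 Γ2)) ⊆ Mod (U (op K Γ1) Γ2))
    (a : B → Ω → Ω → Prop)
    (htotal : ∀ (K : B) (x y : Ω), a K x y ∨ a K y x)
    (hF1 : ∀ (K : B) (ω ω' : Ω), ω ∈ Mod K → ω' ∈ Mod K →
      ¬ (a K ω ω' ∧ ¬ a K ω' ω))
    (hF2 : ∀ (K : B) (ω ω' : Ω), ω ∈ Mod K → ω' ∉ Mod K →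
      a K ω ω' ∧ ¬ a K ω' ω)
    (hF3 : ∀ K K' : B, Mod K = Mod K' → a K = a K')
    (hmincomplete : ∀ (K Γ : B), (Mod Γ).Nonempty → (MinSet (Mod Γ) (a K)).Nonempty)
    (hminretractive : ∀ (K Γ : B) (ω ω' : Ω), ω ∈ Mod Γ → ω' ∈ Mod Γ →
      a K ω' ω → ω ∈ MinSet (Mod Γ) (a K) → ω' ∈ MinSet (Mod Γ) (a K))
    (hcompat : ∀ K Γ : B, Mod (op K Γ) = MinSet (Mod Γ) (a K)) :
    ∀ (K : B) (ω1 ω2 : Ω), a K ω1 ω2 → canRel Mod op K ω1 ω2 := by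
  intro K ω1 ω2 h12
  by_cases h1 : ω1 ∈ Mod K
  · exact Or.inl h1
  · refine Or.inr ⟨h1, ?_, ?_⟩
    · intro h2
      exact (hF2 K ω2 ω1 h2 h1).2 h12
    · intro Γ hω1 hω2 hmin
      rw [hcompat] at hmin ⊢
      exact hminretractive K Γ ω2 ω1 hω2 hω1 h12 hmin
end

section
/- Let ∘ be a base change operator on a base logic satisfying (G1)–(G6), and suppose there exists a base Γ_Ω with Mod(Γ_Ω) = Ω. Then for every base K, the relation ⊑_K^∘ (defined by ω₁ ⊑_K^∘ ω₂ iff for all bases Γ with ω₁,ω₂ ∈ Mod(Γ), ω₂ ∈ Mod(K∘Γ) implies ω₁ ∈ Mod(K∘Γ)) coincides with the relation ≼_K^∘ (defined by ω₁ ≼_K^∘ ω₂ iff ω₁ ∈ Mod(K), or ω₁,ω₂ ∉ Mod(K) and ω₁ ⊑_K^∘ ω₂). -/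
theorem stmt16 {Ω B : Type*} (Mod : B → Set Ω) (U : B → B → B) (op : B → B → B)
    (hU : ∀ B1 B2, Mod (U B1 B2) = Mod B1 ∩ Mod B2)
    (hG1 : ∀ K Γ, Mod (op K Γ) ⊆ Mod Γ)
    (hG2 : ∀ K Γ, (Mod (U K Γ)).Nonempty → Mod (op K Γ) = Mod (U K Γ))
    (hG3 : ∀ K Γ, (Mod Γ).Nonempty → (Mod (op K Γ)).Nonempty)
    (hG4 : ∀ K1 K2 Γ1 Γ2, Mod K1 = Mod K2 → Mod Γ1 = Mod Γ2 →
      Mod (op K1 Γ1) = Mod (op K2 Γ2))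
    (hG5 : ∀ K Γ1 Γ2, Mod (U (op K Γ1) Γ2) ⊆ Mod (op K (U Γ1 Γ2)))
    (hG6 : ∀ K Γ1 Γ2, (Mod (U (op K Γ1) Γ2)).Nonempty →
      Mod (op K (U Γ1 Γ2)) ⊆ Mod (U (op K Γ1) Γ2))
    (ΓΩ : B) (hΓΩ : Mod ΓΩ = Set.univ) :
    ∀ (K : B) (ω1 ω2 : Ω), sqRel Mod op K ω1 ω2 ↔ canRel Mod op K ω1 ω2 := by
  intro K ω1 ω2
  constructor
  · intro hsq
    by_cases h1 : ω1 ∈ Mod K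
    · exact Or.inl h1
    · refine Or.inr ⟨h1, ?_, hsq⟩
      intro h2
      have hne : (Mod (U K ΓΩ)).Nonempty := ⟨ω2, by simp [hU, hΓΩ, h2]⟩
      have heq := hG2 K ΓΩ hne
      have h2' : ω2 ∈ Mod (op K ΓΩ) := by rw [heq, hU, hΓΩ]; simp [h2]
      have h1' := hsq ΓΩ (by simp [hΓΩ]) (by simp [hΓΩ]) h2'
      rw [heq, hU, hΓΩ] at h1'
      exact h1 h1'.1
  · rintro (h1 | ⟨_, _, hsq⟩)
    · intro Γ hω1 hω2 _
      have hne : (Mod (U K Γ)).Nonempty := ⟨ω1, by simp [hU, h1, hω1]⟩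
      rw [hG2 K Γ hne, hU]
      exact ⟨h1, hω1⟩
    · exact hsq
end

section
/- In the infinite-signature propositional setting, the relation ≼_K^∪ defined by: ω₁ ≼_K^∪ ω₂ iff (1) ω₁ ⊨ K, or (2) ω₂ ⊭ K and the set ω₂^true = {p ∈ Σ ∣ ω₂(p) = true} is infinite, or (3) ω₁,ω₂ ⊭ K, both ω₁^true and ω₂^true are finite, and |ω₁^true| ≥ |ω₂^true|, is a total preorder on the set of interpretations (functions Σ → Bool, Σ countably infinite), and moreover whenever a finite base Γ is consistent but inconsistent with K, min(Mod(Γ), ≼_K^∪) = ∅. -/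
/-- Propositional formulas over countably many atoms. -/
inductive PLForm : Type
  | atom : ℕ → PLForm
  | tru : PLForm
  | fls : PLForm
  | neg : PLForm → PLForm
  | conj : PLForm → PLForm → PLForm
  | disj : PLForm → PLForm → PLForm
  | impl : PLForm → PLForm → PLForm
  | biimpl : PLForm → PLForm → PLForm

/-- Evaluation of a propositional formula under an interpretation. -/
def PLForm.eval (ω : ℕ → Bool) : PLForm → Bool
  | .atom n => ω n
  | .tru => true
  | .fls => false
  | .neg φ => !(φ.eval ω)
  | .conj φ ψ => φ.eval ω && ψ.eval ω
  | .disj φ ψ => φ.eval ω || ψ.eval ω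
  | .impl φ ψ => !(φ.eval ω) || ψ.eval ω
  | .biimpl φ ψ => φ.eval ω == ψ.eval ω

/-- Models of a finite base of propositional formulas. -/
def PLMod (Γ : Finset PLForm) : Set (ℕ → Bool) :=
  {ω | ∀ φ ∈ Γ, φ.eval ω = true}

/-- The set of atoms an interpretation maps to true. -/
def trueSet (ω : ℕ → Bool) : Set ℕ := {n | ω n = true}

/-- The relation `≼_K^∪`. -/
def cupRel (K : Finset PLForm) (ω1 ω2 : ℕ → Bool) : Prop :=
  ω1 ∈ PLMod K ∨
  (ω2 ∉ PLMod K ∧ (trueSet ω2).Infinite) ∨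
  (ω1 ∉ PLMod K ∧ ω2 ∉ PLMod K ∧ (trueSet ω1).Finite ∧ (trueSet ω2).Finite ∧
    (trueSet ω2).ncard ≤ (trueSet ω1).ncard)

/-- Atoms occurring in a formula. -/
def PLForm.atoms : PLForm → Finset ℕ
  | .atom n => {n}
  | .tru => ∅
  | .fls => ∅
  | .neg φ => φ.atoms
  | .conj φ ψ => φ.atoms ∪ ψ.atoms
  | .disj φ ψ => φ.atoms ∪ ψ.atoms
  | .impl φ ψ => φ.atoms ∪ ψ.atoms
  | .biimpl φ ψ => φ.atoms ∪ ψ.atoms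

lemma eval_congr (φ : PLForm) (ω1 ω2 : ℕ → Bool)
    (h : ∀ n ∈ φ.atoms, ω1 n = ω2 n) : φ.eval ω1 = φ.eval ω2 := by
  induction φ with
  | atom n => exact h n (by simp [PLForm.atoms])
  | tru => rfl
  | fls => rfl
  | neg φ ih => simp [PLForm.eval, ih h]
  | conj φ ψ ih1 ih2 =>
      simp only [PLForm.eval]
      rw [ih1 (fun n hn => h n (by simp [PLForm.atoms, hn])),
        ih2 (fun n hn => h n (by simp [PLForm.atoms, hn]))]
  | disj φ ψ ih1 ih2 =>
      simp only [PLForm.eval]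
      rw [ih1 (fun n hn => h n (by simp [PLForm.atoms, hn])),
        ih2 (fun n hn => h n (by simp [PLForm.atoms, hn]))]
  | impl φ ψ ih1 ih2 =>
      simp only [PLForm.eval]
      rw [ih1 (fun n hn => h n (by simp [PLForm.atoms, hn])),
        ih2 (fun n hn => h n (by simp [PLForm.atoms, hn]))]
  | biimpl φ ψ ih1 ih2 =>
      simp only [PLForm.eval]
      rw [ih1 (fun n hn => h n (by simp [PLForm.atoms, hn])),
        ih2 (fun n hn => h n (by simp [PLForm.atoms, hn]))]

theorem stmt19 (K : Finset PLForm) :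
    Reflexive (cupRel K) ∧ Transitive (cupRel K) ∧
    (∀ ω1 ω2 : ℕ → Bool, cupRel K ω1 ω2 ∨ cupRel K ω2 ω1) ∧
    (∀ Γ : Finset PLForm, (PLMod Γ).Nonempty → PLMod K ∩ PLMod Γ = ∅ →
      MinSet (PLMod Γ) (cupRel K) = ∅) := by
  classical
  refine ⟨?_, ?_, ?_, ?_⟩
  · -- Reflexive
    intro ω
    by_cases hM : ω ∈ PLMod K
    · exact Or.inl hM
    by_cases hF : (trueSet ω).Finite
    · exact Or.inr (Or.inr ⟨hM, hM, hF, hF, le_rfl⟩)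
    · exact Or.inr (Or.inl ⟨hM, hF⟩)
  · -- Transitive
    intro ω1 ω2 ω3 h12 h23
    rcases h12 with h1 | ⟨hm2, hi2⟩ | ⟨hm1, hm2, hf1, hf2, hc12⟩
    · exact Or.inl h1
    · rcases h23 with h2 | ⟨hm3, hi3⟩ | ⟨hm2', hm3, hf2, hf3, hc23⟩
      · exact absurd h2 hm2
      · exact Or.inr (Or.inl ⟨hm3, hi3⟩)
      · exact absurd hf2 hi2
    · rcases h23 with h2 | ⟨hm3, hi3⟩ | ⟨hm2', hm3, hf2', hf3, hc23⟩
      · exact absurd h2 hm2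
      · exact Or.inr (Or.inl ⟨hm3, hi3⟩)
      · exact Or.inr (Or.inr ⟨hm1, hm3, hf1, hf3, le_trans hc23 hc12⟩)
  · -- Total
    intro ω1 ω2
    by_cases h1 : ω1 ∈ PLMod K
    · exact Or.inl (Or.inl h1)
    by_cases h2 : ω2 ∈ PLMod K
    · exact Or.inr (Or.inl h2)
    by_cases hf2 : (trueSet ω2).Finite
    · by_cases hf1 : (trueSet ω1).Finite
      · rcases le_total (trueSet ω2).ncard (trueSet ω1).ncard with h | h
        · exact Or.inl (Or.inr (Or.inr ⟨h1, h2, hf1, hf2, h⟩))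
        · exact Or.inr (Or.inr (Or.inr ⟨h2, h1, hf2, hf1, h⟩))
      · exact Or.inr (Or.inr (Or.inl ⟨h1, hf1⟩))
    · exact Or.inl (Or.inr (Or.inl ⟨h2, hf2⟩))
  · -- No minimal elements
    intro Γ _ hdisj
    by_contra hne
    rw [← Ne, ← Set.nonempty_iff_ne_empty] at hne
    obtain ⟨ω, hωΓ, hmin⟩ := hne
    have hωK : ω ∉ PLMod K := by
      intro h
      have : ω ∈ PLMod K ∩ PLMod Γ := ⟨h, hωΓ⟩
      rw [hdisj] at this; exact this
    set N : ℕ := (Γ.sup fun φ => φ.atoms.sup id) + 1 with hN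
    have hNbound : ∀ φ ∈ Γ, ∀ n ∈ φ.atoms, n < N := by
      intro φ hφ n hn
      have : n ≤ Γ.sup fun φ => φ.atoms.sup id :=
        le_trans (Finset.le_sup (f := id) hn) (Finset.le_sup (f := fun φ => φ.atoms.sup id) hφ)
      omega
    set k : ℕ := (trueSet ω).ncard with hk
    set ω' : ℕ → Bool := fun n => if n < N then ω n else decide (n < N + k + 1) with hω'
    have hagree : ∀ n, n < N → ω' n = ω n := by
      intro n hn; simp [hω', hn]
    have hω'Γ : ω' ∈ PLMod Γ := by
      intro φ hφ
      rw [eval_congr φ ω' ω (fun n hn => hagree n (hNbound φ hφ n hn))]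
      exact hωΓ φ hφ
    have hω'K : ω' ∉ PLMod K := by
      intro h
      have : ω' ∈ PLMod K ∩ PLMod Γ := ⟨h, hω'Γ⟩
      rw [hdisj] at this; exact this
    have hsub : trueSet ω' ⊆ Set.Iio (N + k + 1) := by
      intro n hn
      simp only [trueSet, Set.mem_setOf_eq, hω'] at hn
      by_cases h : n < N
      · simp only [Set.mem_Iio]; omega
      · rw [if_neg h, decide_eq_true_eq] at hn
        exact Set.mem_Iio.mpr hn
    have hf' : (trueSet ω').Finite := (Set.finite_Iio _).subset hsub
    have hsup : Set.Ico N (N + k + 1) ⊆ trueSet ω' := by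
      intro n hn
      simp only [Set.mem_Ico] at hn
      simp only [trueSet, Set.mem_setOf_eq, hω']
      have : ¬ n < N := by omega
      simp [this, hn.2]
    have hcard : k + 1 ≤ (trueSet ω').ncard := by
      have h1 : (Set.Ico N (N + k + 1)).ncard ≤ (trueSet ω').ncard :=
        Set.ncard_le_ncard hsup hf'
      have h2 : (Set.Ico N (N + k + 1)).ncard = k + 1 := by
        rw [← Finset.coe_Ico, Set.ncard_coe_finset, Nat.card_Ico]; omega
      omega
    have := hmin ω' hω'Γ
    rcases this with h | ⟨_, hi⟩ | ⟨_, _, hfω, _, hle⟩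
    · exact hωK h
    · exact hi hf'
    · rw [← hk] at hle; omega
end
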